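/- arXiv:1507.02666 — 3 statements merged into one kernel-verified Lean document; each statement's English description precedes it below -/
import Mathlib

section
/- Let f(a,z) = Σ_{n≥1} f_n(a) z^n and g(a,w) = Σ_{n≥1} g_n(a) w^n be formal power series over ℂ[a] with zero constant terms, such that f_1 and g_1 are nonzero constants. Suppose f is essentially quadratic (deg f_2 = 1 and deg f_n < n−1 for all n > 2) and g is sub-quadratic (deg g_n < n−1 for all n ≥ 2). Then the composition h(a,z) = g(a,f(a,z)) is essentially quadratic: its coefficient h_2 has degree exactly 1 and deg h_m < m−1 for all m > 2. -/
open Polynomial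

/-- The `m`-th coefficient of the formal composition `g(a, f(a,z))` of power series
over `ℂ[a]` with zero constant terms. -/
noncomputable def compCoeff (f g : ℕ → Polynomial ℂ) (m : ℕ) : Polynomial ℂ :=
  ∑ n ∈ Finset.range (m + 1),
    g n * PowerSeries.coeff (R := Polynomial ℂ) m ((PowerSeries.mk f) ^ n)

/-!
Give `a` weight `1` and `z` weight `-1`. Every monomial of `f` has weight at most `-1`, so those
of `f ^ n` have weight at most `-n`, and for `n ≥ 2` those of `g_n f ^ n` have weight at most
`(n - 2) - n = -2`: they contribute to `h_m` only in degree `≤ m - 2`. Hence `h_m` agrees with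
`c₂ f_m` up to terms of degree `≤ m - 2`, which gives `deg h_2 = deg f_2 = 1` and
`deg h_m ≤ m - 2` for `m > 2`.
-/

theorem Nat.WithBot.lt_sub_one_iff_add_two_le {d : WithBot ℕ} {n : ℕ} :
    d < ((n - 1 : ℕ) : WithBot ℕ) ↔ d + 2 ≤ n := by
  induction d using WithBot.recBotCoe with
  | bot => simp
  | coe d => rw [← Nat.cast_withBot]; exact_mod_cast (show d < n - 1 ↔ d + 2 ≤ n by omega)

namespace Polynomial

variable {R : Type*} [Semiring R]

theorem degree_sum_add_le {ι : Type*} (s : Finset ι) (p : ι → R[X]) {c : ℕ} {m : WithBot ℕ}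
    (h : ∀ i ∈ s, (p i).degree + c ≤ m) : (∑ i ∈ s, p i).degree + c ≤ m := by
  rcases s.eq_empty_or_nonempty with rfl | hs
  · simp
  obtain ⟨i, hi, hmax⟩ := Finset.exists_mem_eq_sup s hs fun i => (p i).degree
  calc (∑ i ∈ s, p i).degree + c ≤ (p i).degree + c := by grw [degree_sum_le, hmax]
    _ ≤ m := h i hi

theorem degree_mul_add_le {p q : R[X]} {a b : ℕ} {k l : WithBot ℕ}
    (hp : p.degree + a ≤ k) (hq : q.degree + b ≤ l) :
    (p * q).degree + (a + b : ℕ) ≤ k + l :=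
  calc (p * q).degree + (a + b : ℕ) ≤ p.degree + q.degree + (a + b : ℕ) := by
        grw [degree_mul_le]
    _ = (p.degree + a) + (q.degree + b) := by push_cast; abel
    _ ≤ k + l := add_le_add hp hq

end Polynomial

namespace PowerSeries

variable {R : Type*} [Semiring R]

def CoeffDegreeBound (F : PowerSeries R[X]) (c : ℕ) : Prop :=
  ∀ k, (coeff k F).degree + c ≤ k

theorem coeffDegreeBound_one : CoeffDegreeBound (1 : PowerSeries R[X]) 0 := by
  intro k
  rw [coeff_one]
  split_ifs with hk
  · simp [hk]
  · simp

theorem CoeffDegreeBound.mul {F G : PowerSeries R[X]} {a b : ℕ} (hF : CoeffDegreeBound F a)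
    (hG : CoeffDegreeBound G b) : CoeffDegreeBound (F * G) (a + b) := by
  intro k
  rw [coeff_mul]
  refine degree_sum_add_le _ _ fun x hx => ?_
  rw [← Finset.HasAntidiagonal.mem_antidiagonal.mp hx, Nat.cast_add]
  exact degree_mul_add_le (hF x.1) (hG x.2)

theorem CoeffDegreeBound.pow {F : PowerSeries R[X]} (hF : CoeffDegreeBound F 1) (n : ℕ) :
    CoeffDegreeBound (F ^ n) n := by
  induction n with
  | zero => simpa using coeffDegreeBound_one
  | succ n ih => simpa [pow_succ] using ih.mul hF

theorem coeffDegreeBound_mk_of_degree_lt {f : ℕ → R[X]} (hf : ∀ k, (f k).degree < k) :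
    CoeffDegreeBound (mk f) 1 := fun k => by
  simpa using Nat.WithBot.add_one_le_of_lt (hf k)

theorem CoeffDegreeBound.degree_mul_coeff_pow_add_two_le {F : PowerSeries R[X]}
    (hF : CoeffDegreeBound F 1) {p : R[X]} {n : ℕ} (hp : p.degree + 2 ≤ n) (m : ℕ) :
    (p * coeff m (F ^ n)).degree + 2 ≤ m := by
  have h := degree_mul_add_le hp (hF.pow n m)
  rw [Nat.cast_add, ← add_assoc, add_comm (n : WithBot ℕ)] at h
  exact (WithBot.add_le_add_iff_right (WithBot.natCast_ne_bot n)).mp h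

end PowerSeries

theorem compCoeff_eq_add_sum_Ico (f g : ℕ → ℂ[X]) {m : ℕ} (hm : m ≠ 0) :
    compCoeff f g m = g 1 * f m +
      ∑ n ∈ Finset.Ico 2 (m + 1), g n * PowerSeries.coeff m (PowerSeries.mk f ^ n) := by
  rw [compCoeff, Finset.range_eq_Ico, Finset.sum_eq_sum_Ico_succ_bot (by omega),
    Finset.sum_eq_sum_Ico_succ_bot (by omega)]
  simp [PowerSeries.coeff_one, hm]

theorem composition_essentially_quadratic_of_subquadratic_outer_general
    (f g : ℕ → Polynomial ℂ) (hf0 : f 0 = 0)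
    (c₁ c₂ : ℂ) (hf1 : f 1 = C c₁)
    (hc₂ : c₂ ≠ 0) (hg1 : g 1 = C c₂)
    (hf2 : (f 2).degree = 1)
    (hfn : ∀ n : ℕ, 2 < n → (f n).degree < ((n - 1 : ℕ) : WithBot ℕ))
    (hgn : ∀ n : ℕ, 2 ≤ n → (g n).degree < ((n - 1 : ℕ) : WithBot ℕ)) :
    (compCoeff f g 2).degree = 1 ∧
      ∀ m : ℕ, 2 < m → (compCoeff f g m).degree < ((m - 1 : ℕ) : WithBot ℕ) := by
  have hF : PowerSeries.CoeffDegreeBound (PowerSeries.mk f) 1 :=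
    PowerSeries.coeffDegreeBound_mk_of_degree_lt fun
    | 0 => by simp [hf0]
    | 1 => by grw [hf1, degree_C_le]; decide
    | 2 => by rw [hf2]; decide
    | k + 3 => (hfn (k + 3) (by omega)).trans (by norm_cast; omega)
  have htail (m : ℕ) :
      (∑ n ∈ Finset.Ico 2 (m + 1), g n * PowerSeries.coeff m (PowerSeries.mk f ^ n)).degree + 2
        ≤ m :=
    degree_sum_add_le _ _ fun n hn => hF.degree_mul_coeff_pow_add_two_le
      (Nat.WithBot.lt_sub_one_iff_add_two_le.mp (hgn n (Finset.mem_Ico.mp hn).1)) m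
  have hlead : (g 1 * f 2).degree = 1 := by rw [hg1, degree_C_mul hc₂, hf2]
  refine ⟨?_, fun m hm => ?_⟩
  · rw [compCoeff_eq_add_sum_Ico f g two_ne_zero, degree_add_eq_left_of_degree_lt] <;> rw [hlead]
    simpa using Nat.WithBot.lt_sub_one_iff_add_two_le.mpr (htail 2)
  · rw [compCoeff_eq_add_sum_Ico f g (by omega), Nat.WithBot.lt_sub_one_iff_add_two_le]
    grw [degree_add_le, ← max_add_add_right]
    refine max_le ?_ (htail m)
    rw [hg1, degree_C_mul hc₂]
    exact Nat.WithBot.lt_sub_one_iff_add_two_le.mp (hfn m hm)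

/-- If `f(a,z) = Σ_{n≥1} f_n(a) z^n` is essentially quadratic
(`deg f_2 = 1`, `deg f_n < n-1` for `n > 2`) and `g(a,w) = Σ_{n≥1} g_n(a) w^n` is
sub-quadratic (`deg g_n < n-1` for `n ≥ 2`), with `f_1, g_1` nonzero constants,
then the composition `h(a,z) = g(a, f(a,z))` is essentially quadratic:
`deg h_2 = 1` and `deg h_m < m-1` for `m > 2`. -/
theorem composition_essentially_quadratic_of_subquadratic_outer
    (f g : ℕ → Polynomial ℂ) (hf0 : f 0 = 0) (hg0 : g 0 = 0)
    (c₁ c₂ : ℂ) (hc₁ : c₁ ≠ 0) (hf1 : f 1 = C c₁)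
    (hc₂ : c₂ ≠ 0) (hg1 : g 1 = C c₂)
    (hf2 : (f 2).degree = 1)
    (hfn : ∀ n : ℕ, 2 < n → (f n).degree < ((n - 1 : ℕ) : WithBot ℕ))
    (hgn : ∀ n : ℕ, 2 ≤ n → (g n).degree < ((n - 1 : ℕ) : WithBot ℕ)) :
    (compCoeff f g 2).degree = 1 ∧
      ∀ m : ℕ, 2 < m → (compCoeff f g m).degree < ((m - 1 : ℕ) : WithBot ℕ) :=
  composition_essentially_quadratic_of_subquadratic_outer_general f g hf0 c₁ c₂ hf1 hc₂ hg1 hf2 hfn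
    hgn
end

section
/- Let f(a,z) = Σ_{n≥1} f_n(a) z^n and g(a,w) = Σ_{n≥1} g_n(a) w^n be formal power series over ℂ[a] with f_1, g_1 nonzero constants. If f is sub-quadratic and g is essentially quadratic, then the composition h(a,z) = g(a,f(a,z)) is essentially quadratic. -/
/-!
Weight the monomial `a^k z^j` by `j - k`. Since `deg f_j ≤ j - 1`, induction on `n` shows that the
`z^m`-coefficient of `f^n` has degree at most `m - n`; sub-quadraticity saves one more degree once
`m > n`, because a factor `f_j` with `j ≥ 2` must then occur. Hence every term `g_n [z^m] f^n` of
`h_m` has degree at most `m - 2` when `m > 2`, while `h_2 = g_1 f_2 + g_2 f_1²` owes its linear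
part to `g_2 f_1²` alone.
-/

open Polynomial

namespace Polynomial

variable {R : Type*} [Semiring R]

theorem natDegree_le_pred_of_degree_lt {p : R[X]} {n : ℕ} (h : p.degree < n) :
    p.natDegree ≤ n - 1 := by
  rcases eq_or_ne p 0 with rfl | hp
  · simp
  · have := (natDegree_lt_iff_degree_lt hp).2 h
    omega

end Polynomial

namespace PowerSeries

variable {R : Type*} [Semiring R] {φ : PowerSeries R[X]}

theorem coeff_pow_eq_zero_of_lt (h0 : constantCoeff φ = 0) {n m : ℕ} (h : m < n) :
    coeff m (φ ^ n) = 0 :=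
  coeff_of_lt_order m ((Nat.cast_lt.2 h).trans_le (le_order_pow_of_constantCoeff_eq_zero n h0))

theorem natDegree_coeff_pow_succ_le (h0 : constantCoeff φ = 0) {n m d : ℕ}
    (h : ∀ i j, i + j = m → n ≤ i → 1 ≤ j → (coeff i (φ ^ n) * coeff j φ).natDegree ≤ d) :
    (coeff m (φ ^ (n + 1))).natDegree ≤ d := by
  rw [pow_succ, coeff_mul]
  refine natDegree_sum_le_of_forall_le _ _ fun ⟨i, j⟩ hij => ?_
  rw [Finset.HasAntidiagonal.mem_antidiagonal] at hij
  rcases lt_or_ge i n with hi | hi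
  · simp [coeff_pow_eq_zero_of_lt h0 hi]
  rcases Nat.eq_zero_or_pos j with rfl | hj
  · simp [h0]
  exact h i j hij hi hj

theorem natDegree_coeff_pow_le (h0 : constantCoeff φ = 0)
    (hφ : ∀ j, (coeff j φ).natDegree ≤ j - 1) (n m : ℕ) :
    (coeff m (φ ^ n)).natDegree ≤ m - n := by
  induction n generalizing m with
  | zero => rw [pow_zero, coeff_one]; split_ifs <;> simp
  | succ n ih =>
    refine natDegree_coeff_pow_succ_le h0 fun i j hij hi hj => ?_
    have := natDegree_mul_le.trans (add_le_add (ih i) (hφ j))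
    omega

theorem natDegree_coeff_le_sub_one (h0 : constantCoeff φ = 0)
    (h1 : (coeff 1 φ).natDegree = 0) (h2 : ∀ j, 2 ≤ j → (coeff j φ).natDegree ≤ j - 2) :
    ∀ j, (coeff j φ).natDegree ≤ j - 1
  | 0 => by simp [h0]
  | 1 => by simp [h1]
  | j + 2 => (h2 (j + 2) (by omega)).trans (by omega)

theorem natDegree_coeff_pow_le_of_lt (h0 : constantCoeff φ = 0)
    (h1 : (coeff 1 φ).natDegree = 0) (h2 : ∀ j, 2 ≤ j → (coeff j φ).natDegree ≤ j - 2)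
    {n m : ℕ} (hnm : n < m) :
    (coeff m (φ ^ n)).natDegree ≤ m - n - 1 := by
  induction n generalizing m with
  | zero => simp [coeff_one, hnm.ne']
  | succ n ih =>
    refine natDegree_coeff_pow_succ_le h0 fun i j hij hi hj => natDegree_mul_le.trans ?_
    rcases lt_or_ge j 2 with hj1 | hj2
    · obtain rfl : j = 1 := by omega
      have := ih (m := i) (by omega)
      omega
    · have := add_le_add
        (natDegree_coeff_pow_le h0 (natDegree_coeff_le_sub_one h0 h1 h2) n i) (h2 j hj2)
      omega

end PowerSeries

section

open PowerSeries

theorem compCoeff_two {f g : ℕ → ℂ[X]} (hf0 : f 0 = 0) (hg0 : g 0 = 0) :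
    compCoeff f g 2 = g 1 * f 2 + g 2 * f 1 ^ 2 := by
  have : coeff 2 (mk f ^ 2) = f 1 ^ 2 := by
    simp [sq, PowerSeries.coeff_mul, Finset.Nat.antidiagonal_succ, hf0]
  simp [compCoeff, Finset.sum_range_succ, hg0, this]

theorem natDegree_compCoeff_le {f g : ℕ → ℂ[X]} (hf0 : f 0 = 0) (hg0 : g 0 = 0)
    (hf1 : (f 1).natDegree = 0) (hf : ∀ n, 2 ≤ n → (f n).natDegree ≤ n - 2)
    (hg1 : (g 1).natDegree = 0) (hg2 : (g 2).natDegree ≤ 1)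
    (hg : ∀ n, 3 ≤ n → (g n).natDegree ≤ n - 2) {m : ℕ} (hm : 2 < m) :
    (compCoeff f g m).natDegree ≤ m - 2 := by
  have h0 : constantCoeff (mk f) = 0 := by simp [← coeff_zero_eq_constantCoeff_apply, hf0]
  have h1 : (coeff 1 (mk f)).natDegree = 0 := by simpa using hf1
  have h2 : ∀ j, 2 ≤ j → (coeff j (mk f)).natDegree ≤ j - 2 := by simpa using hf
  refine natDegree_sum_le_of_forall_le _ _ fun n hn => ?_
  rw [Finset.mem_range] at hn
  match n with
  | 0 => simp [hg0]
  | 1 =>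
    refine natDegree_mul_le.trans ?_
    simpa [hg1] using hf m hm.le
  | 2 =>
    refine natDegree_mul_le.trans ?_
    have := natDegree_coeff_pow_le_of_lt h0 h1 h2 hm
    omega
  | n + 3 =>
    refine natDegree_mul_le.trans ?_
    have := natDegree_coeff_pow_le h0 (natDegree_coeff_le_sub_one h0 h1 h2) (n + 3) m
    have := hg (n + 3) (by omega)
    omega

end

theorem composition_essentially_quadratic_of_subquadratic_inner_general
    (f g : ℕ → Polynomial ℂ) (hf0 : f 0 = 0) (hg0 : g 0 = 0)
    (c₁ c₂ : ℂ) (hc₁ : c₁ ≠ 0) (hf1 : f 1 = C c₁)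
    (hg1 : g 1 = C c₂)
    (hfn : ∀ n : ℕ, 2 ≤ n → (f n).degree < ((n - 1 : ℕ) : WithBot ℕ))
    (hg2 : (g 2).degree = 1)
    (hgn : ∀ n : ℕ, 2 < n → (g n).degree < ((n - 1 : ℕ) : WithBot ℕ)) :
    (compCoeff f g 2).degree = 1 ∧
      ∀ m : ℕ, 2 < m → (compCoeff f g m).degree < ((m - 1 : ℕ) : WithBot ℕ) := by
  have hf : ∀ n, 2 ≤ n → (f n).natDegree ≤ n - 2 := fun n hn =>
    (natDegree_le_pred_of_degree_lt (hfn n hn)).trans (by omega)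
  have hg : ∀ n, 3 ≤ n → (g n).natDegree ≤ n - 2 := fun n hn =>
    (natDegree_le_pred_of_degree_lt (hgn n hn)).trans (by omega)
  constructor
  · have hquad : (g 2 * C (c₁ ^ 2)).degree = 1 := by
      rw [degree_mul_C (pow_ne_zero 2 hc₁), hg2]
    have hconst : (C c₂ * f 2).degree < 1 := calc
      _ ≤ (C c₂).degree + (f 2).degree := degree_mul_le _ _
      _ ≤ 0 + (f 2).degree := add_le_add_left degree_C_le _
      _ < 1 := by simpa using hfn 2 le_rfl
    rw [compCoeff_two hf0 hg0, hf1, hg1, ← C_pow,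
      degree_add_eq_right_of_degree_lt (hconst.trans_eq hquad.symm), hquad]
  · intro m hm
    have := natDegree_compCoeff_le hf0 hg0 (by simp [hf1]) hf (by simp [hg1])
      (natDegree_le_of_degree_le hg2.le) hg hm
    exact degree_le_natDegree.trans_lt (by exact_mod_cast (by omega : _ < m - 1))

/-- If `f(a,z) = Σ_{n≥1} f_n(a) z^n` is sub-quadratic (`deg f_n < n-1` for `n ≥ 2`)
and `g(a,w) = Σ_{n≥1} g_n(a) w^n` is essentially quadratic
(`deg g_2 = 1`, `deg g_n < n-1` for `n > 2`), with `f_1, g_1` nonzero constants,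
then the composition is essentially quadratic.
`deg h_2 = 1` and `deg h_m < m-1` for `m > 2`. -/
theorem composition_essentially_quadratic_of_subquadratic_inner
    (f g : ℕ → Polynomial ℂ) (hf0 : f 0 = 0) (hg0 : g 0 = 0)
    (c₁ c₂ : ℂ) (hc₁ : c₁ ≠ 0) (hf1 : f 1 = C c₁)
    (hc₂ : c₂ ≠ 0) (hg1 : g 1 = C c₂)
    (hfn : ∀ n : ℕ, 2 ≤ n → (f n).degree < ((n - 1 : ℕ) : WithBot ℕ))
    (hg2 : (g 2).degree = 1)
    (hgn : ∀ n : ℕ, 2 < n → (g n).degree < ((n - 1 : ℕ) : WithBot ℕ)) :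
    (compCoeff f g 2).degree = 1 ∧
      ∀ m : ℕ, 2 < m → (compCoeff f g m).degree < ((m - 1 : ℕ) : WithBot ℕ) :=
  composition_essentially_quadratic_of_subquadratic_inner_general f g hf0 hg0 c₁ c₂ hc₁ hf1 hg1 hfn
    hg2 hgn
end

section
/- Let f : U → ℂ be holomorphic near a fixed point z₀ with f(z₀) = z₀ and |f'(z₀)| ∉ {0, 1}. Then f is linearizable at z₀: there exists a holomorphic map h defined near 0 with h(0) = z₀, h'(0) ≠ 0, and f(h(z)) = h(f'(z₀)·z) for z near 0. -/
/-!
Near an attracting fixed point, `f z - z₀ = μ (z - z₀) + O(|z - z₀|²)` and the orbit of `z`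
converges to `z₀` at a rate `c ^ n` for any `c > |μ|`. Taking `c ^ 2 < |μ|`, the normalized
iterates `(f^[n] z - z₀) / μ ^ n` change by `O((c ^ 2 / |μ|) ^ n)` at step `n`, so they converge
uniformly near `z₀` to a holomorphic `ψ` with `ψ (f z) = μ ψ z`, `ψ z₀ = 0` and `ψ' z₀ = 1`; a
local inverse of `ψ` linearizes `f`. A repelling fixed point of `f` is an attracting fixed point
of a local inverse of `f`, and a linearization of that inverse with multiplier `μ⁻¹` also
linearizes `f`.
-/

open Filter Metric Set Function
open scoped Topology ContDiff

theorem AnalyticAt.exists_localInverse {𝕜 : Type*} [RCLike 𝕜] {ψ : 𝕜 → 𝕜} {a : 𝕜}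
    (hψ : AnalyticAt 𝕜 ψ a) (hd : deriv ψ a ≠ 0) :
    ∃ g : 𝕜 → 𝕜, AnalyticAt 𝕜 g (ψ a) ∧ g (ψ a) = a ∧ deriv g (ψ a) = (deriv ψ a)⁻¹ ∧
      (∀ᶠ x in 𝓝 a, g (ψ x) = x) ∧ ∀ᶠ y in 𝓝 (ψ a), ψ (g y) = y := by
  have hs : HasStrictDerivAt ψ (deriv ψ a) a := hψ.hasStrictDerivAt
  have hC : ContDiffAt 𝕜 ω ψ a := hψ.contDiffAt
  exact ⟨hs.localInverse ψ _ a hd,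
    (hC.to_localInverse (hs.hasDerivAt.hasFDerivAt_equiv hd) (by simp)).analyticAt,
    (hs.hasStrictFDerivAt_equiv hd).localInverse_apply_image,
    (hs.to_localInverse hd).hasDerivAt.deriv,
    hs.eventually_left_inverse hd, hs.eventually_right_inverse hd⟩

theorem AnalyticAt.isBigO_sub_sub_smul_deriv {𝕜 E : Type*} [NontriviallyNormedField 𝕜]
    [NormedAddCommGroup E] [NormedSpace 𝕜 E] {f : 𝕜 → E} {a : 𝕜} (hf : AnalyticAt 𝕜 f a) :
    (fun z => f z - f a - (z - a) • deriv f a) =O[𝓝 a] fun z => (z - a) ^ 2 := by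
  obtain ⟨p, hp⟩ := hf
  have hk : ContinuousAt (dslope (dslope f a) a) a :=
    hp.has_fpower_series_dslope_fslope.has_fpower_series_dslope_fslope.continuousAt
  have heq : ∀ z, f z - f a - (z - a) • deriv f a = (z - a) ^ 2 • dslope (dslope f a) a z := by
    intro z
    rw [← sub_smul_dslope f a z, ← dslope_same f a, ← smul_sub, ← sub_smul_dslope (dslope f a) a z,
      smul_smul, sq]
  simp only [heq]
  exact ((Asymptotics.isBigO_refl _ _).smul (hk.tendsto.isBigO_one 𝕜)).congr_right fun z => by simp

theorem HasDerivAt.eventually_norm_sub_le {𝕜 E : Type*} [NontriviallyNormedField 𝕜]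
    [NormedAddCommGroup E] [NormedSpace 𝕜 E] {f : 𝕜 → E} {f' : E} {a : 𝕜} {c : ℝ}
    (hf : HasDerivAt f f' a) (hc : ‖f'‖ < c) :
    ∀ᶠ z in 𝓝 a, ‖f z - f a‖ ≤ c * ‖z - a‖ := by
  filter_upwards [hf.isLittleO.bound (sub_pos.2 hc)] with z hz
  calc ‖f z - f a‖ = ‖(f z - f a - (z - a) • f') + (z - a) • f'‖ := by rw [sub_add_cancel]
    _ ≤ (c - ‖f'‖) * ‖z - a‖ + ‖z - a‖ * ‖f'‖ := (norm_add_le _ _).trans (by rw [norm_smul]; gcongr)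
    _ = c * ‖z - a‖ := by ring

theorem tendstoUniformlyOn_tsum_succ_sub {α E : Type*} [NormedAddCommGroup E] [CompleteSpace E]
    {F : ℕ → α → E} {u : ℕ → ℝ} {s : Set α} (hu : Summable u)
    (hF : ∀ n, ∀ x ∈ s, ‖F (n + 1) x - F n x‖ ≤ u n) :
    TendstoUniformlyOn F (fun x => F 0 x + ∑' n, (F (n + 1) x - F n x)) atTop s := by
  have hsum := tendstoUniformlyOn_tsum_nat hu hF
  rw [Metric.tendstoUniformlyOn_iff] at hsum ⊢
  intro ε hε
  filter_upwards [hsum ε hε] with N hN x hx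
  have h : dist (∑' n, (F (n + 1) x - F n x)) (F N x - F 0 x) < ε := by
    simpa only [Finset.sum_range_sub (fun n => F n x)] using hN x hx
  rwa [← dist_add_left (F 0 x), add_sub_cancel] at h

noncomputable def koenigsSeq (f : ℂ → ℂ) (z₀ μ : ℂ) (n : ℕ) (z : ℂ) : ℂ := (f^[n] z - z₀) / μ ^ n

section KoenigsSeq

variable {f : ℂ → ℂ} {z₀ μ : ℂ}

theorem koenigsSeq_apply_self (hfix : f z₀ = z₀) (n : ℕ) : koenigsSeq f z₀ μ n z₀ = 0 := by
  simp [koenigsSeq, iterate_fixed hfix]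

theorem koenigsSeq_apply_map (hμ : μ ≠ 0) (n : ℕ) (z : ℂ) :
    koenigsSeq f z₀ μ n (f z) = μ * koenigsSeq f z₀ μ (n + 1) z := by
  rw [koenigsSeq, koenigsSeq, iterate_succ_apply, pow_succ]
  field_simp

theorem koenigsSeq_succ_sub (hμ : μ ≠ 0) (n : ℕ) (z : ℂ) :
    koenigsSeq f z₀ μ (n + 1) z - koenigsSeq f z₀ μ n z =
      (f (f^[n] z) - z₀ - (f^[n] z - z₀) * μ) / μ ^ (n + 1) := by
  simp only [koenigsSeq, iterate_succ_apply', pow_succ]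
  field_simp

theorem hasDerivAt_koenigsSeq (hf : HasDerivAt f μ z₀) (hfix : f z₀ = z₀) (hμ : μ ≠ 0) (n : ℕ) :
    HasDerivAt (koenigsSeq f z₀ μ n) 1 z₀ := by
  show HasDerivAt (fun z => (f^[n] z - z₀) / μ ^ n) 1 z₀
  simpa [hμ] using ((hf.iterate _ hfix n).sub_const z₀).div_const (μ ^ n)

variable {r c M : ℝ}

theorem norm_iterate_sub_le (hmaps : MapsTo f (closedBall z₀ r) (closedBall z₀ r))
    (hc : ∀ z ∈ closedBall z₀ r, ‖f z - z₀‖ ≤ c * ‖z - z₀‖) (hc0 : 0 ≤ c) (n : ℕ) {z : ℂ}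
    (hz : z ∈ closedBall z₀ r) : ‖f^[n] z - z₀‖ ≤ c ^ n * ‖z - z₀‖ := by
  induction n with
  | zero => simp
  | succ n ih =>
    calc ‖f^[n + 1] z - z₀‖ ≤ c * ‖f^[n] z - z₀‖ := by
          rw [iterate_succ_apply']; exact hc _ (hmaps.iterate n hz)
      _ ≤ c * (c ^ n * ‖z - z₀‖) := by gcongr
      _ = c ^ (n + 1) * ‖z - z₀‖ := by ring

theorem norm_koenigsSeq_succ_sub_le (hμ : μ ≠ 0)
    (hmaps : MapsTo f (closedBall z₀ r) (closedBall z₀ r))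
    (hc : ∀ z ∈ closedBall z₀ r, ‖f z - z₀‖ ≤ c * ‖z - z₀‖) (hc0 : 0 ≤ c)
    (hM : ∀ z ∈ closedBall z₀ r, ‖f z - z₀ - (z - z₀) * μ‖ ≤ M * ‖z - z₀‖ ^ 2) (hM0 : 0 ≤ M)
    (n : ℕ) {z : ℂ} (hz : z ∈ closedBall z₀ r) :
    ‖koenigsSeq f z₀ μ (n + 1) z - koenigsSeq f z₀ μ n z‖ ≤
      M * r ^ 2 / ‖μ‖ * (c ^ 2 / ‖μ‖) ^ n := by
  have hw : ‖f^[n] z - z₀‖ ≤ c ^ n * r :=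
    (norm_iterate_sub_le hmaps hc hc0 n hz).trans
      (by gcongr; simpa [dist_eq_norm] using hz)
  rw [koenigsSeq_succ_sub hμ, norm_div, norm_pow]
  calc ‖f (f^[n] z) - z₀ - (f^[n] z - z₀) * μ‖ / ‖μ‖ ^ (n + 1)
      ≤ M * (c ^ n * r) ^ 2 / ‖μ‖ ^ (n + 1) := by
        gcongr
        exact (hM _ (hmaps.iterate n hz)).trans (by gcongr)
    _ = M * r ^ 2 / ‖μ‖ * (c ^ 2 / ‖μ‖) ^ n := by
        have : ‖μ‖ ≠ 0 := norm_ne_zero_iff.2 hμ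
        rw [div_pow]
        field_simp
        ring

theorem tendstoUniformlyOn_koenigsSeq (hμ : μ ≠ 0)
    (hmaps : MapsTo f (closedBall z₀ r) (closedBall z₀ r))
    (hc : ∀ z ∈ closedBall z₀ r, ‖f z - z₀‖ ≤ c * ‖z - z₀‖) (hc0 : 0 ≤ c) (hcμ : c ^ 2 < ‖μ‖)
    (hM : ∀ z ∈ closedBall z₀ r, ‖f z - z₀ - (z - z₀) * μ‖ ≤ M * ‖z - z₀‖ ^ 2) (hM0 : 0 ≤ M) :
    TendstoUniformlyOn (koenigsSeq f z₀ μ)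
      (fun z => koenigsSeq f z₀ μ 0 z + ∑' n, (koenigsSeq f z₀ μ (n + 1) z - koenigsSeq f z₀ μ n z))
      atTop (closedBall z₀ r) :=
  have hq : c ^ 2 / ‖μ‖ < 1 := (div_lt_one (hcμ.trans_le' (by positivity))).2 hcμ
  tendstoUniformlyOn_tsum_succ_sub
    ((summable_geometric_of_lt_one (by positivity) hq).mul_left _)
    fun n _ hz => norm_koenigsSeq_succ_sub_le hμ hmaps hc hc0 hM hM0 n hz

theorem differentiableOn_koenigsSeq (hf : DifferentiableOn ℂ f (closedBall z₀ r))
    (hmaps : MapsTo f (closedBall z₀ r) (closedBall z₀ r)) (n : ℕ) :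
    DifferentiableOn ℂ (koenigsSeq f z₀ μ n) (closedBall z₀ r) :=
  ((hf.iterate hmaps n).sub_const z₀).div_const _

end KoenigsSeq

section KoenigsLimit

variable {f ψ : ℂ → ℂ} {z₀ μ : ℂ} {r : ℝ}

theorem koenigs_limit_apply_self
    (hψ : TendstoUniformlyOn (koenigsSeq f z₀ μ) ψ atTop (closedBall z₀ r))
    (hr : 0 ≤ r) (hfix : f z₀ = z₀) : ψ z₀ = 0 :=
  tendsto_nhds_unique (hψ.tendsto_at (mem_closedBall_self hr))
    (by simp [koenigsSeq_apply_self hfix])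

theorem koenigs_limit_apply_map
    (hψ : TendstoUniformlyOn (koenigsSeq f z₀ μ) ψ atTop (closedBall z₀ r))
    (hμ : μ ≠ 0) (hmaps : MapsTo f (closedBall z₀ r) (closedBall z₀ r)) {z : ℂ}
    (hz : z ∈ closedBall z₀ r) : ψ (f z) = μ * ψ z :=
  tendsto_nhds_unique (hψ.tendsto_at (hmaps hz)) <| by
    simpa only [koenigsSeq_apply_map hμ, comp_def] using
      ((hψ.tendsto_at hz).comp (tendsto_add_atTop_nat 1)).const_mul μ

theorem differentiableOn_koenigs_limit
    (hψ : TendstoUniformlyOn (koenigsSeq f z₀ μ) ψ atTop (closedBall z₀ r))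
    (hf : DifferentiableOn ℂ f (closedBall z₀ r))
    (hmaps : MapsTo f (closedBall z₀ r) (closedBall z₀ r)) :
    DifferentiableOn ℂ ψ (ball z₀ r) :=
  (hψ.tendstoLocallyUniformlyOn.mono ball_subset_closedBall).differentiableOn
    (.of_forall fun n => (differentiableOn_koenigsSeq hf hmaps n).mono ball_subset_closedBall)
    isOpen_ball

theorem deriv_koenigs_limit
    (hψ : TendstoUniformlyOn (koenigsSeq f z₀ μ) ψ atTop (closedBall z₀ r)) (hr : 0 < r)
    (hf : DifferentiableOn ℂ f (closedBall z₀ r))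
    (hmaps : MapsTo f (closedBall z₀ r) (closedBall z₀ r)) (hf' : HasDerivAt f μ z₀)
    (hfix : f z₀ = z₀) (hμ : μ ≠ 0) : deriv ψ z₀ = 1 := by
  have hderiv := ((hψ.tendstoLocallyUniformlyOn.mono ball_subset_closedBall).deriv
    (.of_forall fun n => (differentiableOn_koenigsSeq hf hmaps n).mono ball_subset_closedBall)
    isOpen_ball).tendsto_at (mem_ball_self hr)
  refine tendsto_nhds_unique hderiv ?_
  simp [(hasDerivAt_koenigsSeq hf' hfix hμ _).deriv]

end KoenigsLimit

theorem exists_semiconj_of_attracting {f : ℂ → ℂ} {z₀ : ℂ} (hf : AnalyticAt ℂ f z₀)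
    (hfix : f z₀ = z₀) (hμ0 : deriv f z₀ ≠ 0) (hμ1 : ‖deriv f z₀‖ < 1) :
    ∃ ψ : ℂ → ℂ, AnalyticAt ℂ ψ z₀ ∧ ψ z₀ = 0 ∧ deriv ψ z₀ = 1 ∧
      ∀ᶠ z in 𝓝 z₀, ψ (f z) = deriv f z₀ * ψ z := by
  set μ := deriv f z₀
  have hμpos : 0 < ‖μ‖ := norm_pos_iff.2 hμ0
  obtain ⟨c, hμc, hc⟩ : ∃ c, ‖μ‖ < c ∧ c < √‖μ‖ :=
    exists_between ((Real.lt_sqrt hμpos.le).2 (by nlinarith))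
  have hc0 : 0 ≤ c := hμpos.le.trans hμc.le
  have hcμ : c ^ 2 < ‖μ‖ := (Real.lt_sqrt hc0).1 hc
  have hc1 : c ≤ 1 := by nlinarith
  obtain ⟨M, hM0, hM⟩ := hf.isBigO_sub_sub_smul_deriv.exists_pos
  have hf' : HasDerivAt f μ z₀ := hf.differentiableAt.hasDerivAt
  obtain ⟨r, hr, hball⟩ := nhds_basis_closedBall.eventually_iff.1
    (hf.eventually_analyticAt.and ((hf'.eventually_norm_sub_le hμc).and hM.bound))
  simp only [hfix, smul_eq_mul, norm_pow] at hball
  have hdiff : DifferentiableOn ℂ f (closedBall z₀ r) :=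
    fun z hz => (hball hz).1.differentiableAt.differentiableWithinAt
  have hcontr : ∀ z ∈ closedBall z₀ r, ‖f z - z₀‖ ≤ c * ‖z - z₀‖ := fun z hz => (hball hz).2.1
  have hmaps : MapsTo f (closedBall z₀ r) (closedBall z₀ r) := fun z hz => by
    simp only [mem_closedBall, dist_eq_norm] at hz ⊢
    nlinarith [hcontr z (mem_closedBall_iff_norm.2 hz), norm_nonneg (z - z₀)]
  obtain ⟨ψ, hψ⟩ : ∃ ψ, TendstoUniformlyOn (koenigsSeq f z₀ μ) ψ atTop (closedBall z₀ r) :=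
    ⟨_, tendstoUniformlyOn_koenigsSeq hμ0 hmaps hcontr hc0 hcμ (fun z hz => (hball hz).2.2) hM0.le⟩
  exact ⟨ψ, (differentiableOn_koenigs_limit hψ hdiff hmaps).analyticAt (ball_mem_nhds z₀ hr),
    koenigs_limit_apply_self hψ hr.le hfix, deriv_koenigs_limit hψ hr hdiff hmaps hf' hfix hμ0,
    eventually_of_mem (closedBall_mem_nhds z₀ hr) fun _ => koenigs_limit_apply_map hψ hμ0 hmaps⟩

def IsLinearizableAt (f : ℂ → ℂ) (z₀ μ : ℂ) : Prop :=
  ∃ h : ℂ → ℂ, AnalyticAt ℂ h 0 ∧ h 0 = z₀ ∧ deriv h 0 ≠ 0 ∧ ∀ᶠ z in 𝓝 0, f (h z) = h (μ * z)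

theorem isLinearizableAt_of_semiconj {f ψ : ℂ → ℂ} {z₀ μ : ℂ} (hf : ContinuousAt f z₀)
    (hfix : f z₀ = z₀) (hψ : AnalyticAt ℂ ψ z₀) (hψ0 : ψ z₀ = 0) (hψ' : deriv ψ z₀ ≠ 0)
    (hconj : ∀ᶠ z in 𝓝 z₀, ψ (f z) = μ * ψ z) : IsLinearizableAt f z₀ μ := by
  obtain ⟨g, hg, hg0, hg', hleft, hright⟩ := hψ.exists_localInverse hψ'
  rw [hψ0] at hg hg0 hg' hright
  have hg_tendsto : Tendsto g (𝓝 0) (𝓝 z₀) := hg0 ▸ hg.continuousAt.tendsto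
  have hfg_tendsto : Tendsto (f ∘ g) (𝓝 0) (𝓝 z₀) := (hfix ▸ hf.tendsto).comp hg_tendsto
  refine ⟨g, hg, hg0, hg' ▸ inv_ne_zero hψ', ?_⟩
  filter_upwards [hright, hg_tendsto.eventually hconj, hfg_tendsto.eventually hleft]
    with z hψg hconj_g hleft_fg
  calc f (g z) = g (ψ (f (g z))) := hleft_fg.symm
    _ = g (μ * z) := by rw [hconj_g, hψg]

theorem IsLinearizableAt.of_rightInverse {f g : ℂ → ℂ} {z₀ μ : ℂ} (hμ : μ ≠ 0)
    (hg : IsLinearizableAt g z₀ μ⁻¹) (hfg : ∀ᶠ y in 𝓝 z₀, f (g y) = y) :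
    IsLinearizableAt f z₀ μ := by
  obtain ⟨h, hh, hh0, hh', hconj⟩ := hg
  have hmul : Tendsto (μ * ·) (𝓝 0) (𝓝 0) := by
    simpa using (continuous_const_mul μ).tendsto 0
  have hh_tendsto : Tendsto h (𝓝 0) (𝓝 z₀) := hh0 ▸ hh.continuousAt.tendsto
  refine ⟨h, hh, hh0, hh', ?_⟩
  filter_upwards [hmul.eventually hconj, (hh_tendsto.comp hmul).eventually hfg]
    with z hconj_μz hfg_μz
  rw [inv_mul_cancel_left₀ hμ] at hconj_μz
  rw [← hconj_μz]
  exact hfg_μz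

theorem IsLinearizableAt.exists_ball {f : ℂ → ℂ} {z₀ μ : ℂ} (hlin : IsLinearizableAt f z₀ μ) :
    ∃ ε > (0 : ℝ), ∃ h : ℂ → ℂ,
      DifferentiableOn ℂ h (ball 0 ε) ∧ h 0 = z₀ ∧ deriv h 0 ≠ 0 ∧
      ∀ z ∈ ball (0 : ℂ) ε, f (h z) = h (μ * z) := by
  obtain ⟨h, hh, hh0, hh', hconj⟩ := hlin
  obtain ⟨ε, hε, hball⟩ := eventually_nhds_iff_ball.1 (hh.eventually_analyticAt.and hconj)
  exact ⟨ε, hε, h, fun z hz => (hball z hz).1.differentiableWithinAt, hh0, hh',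
    fun z hz => (hball z hz).2⟩

theorem isLinearizableAt_of_attracting {f : ℂ → ℂ} {z₀ : ℂ} (hf : AnalyticAt ℂ f z₀)
    (hfix : f z₀ = z₀) (hμ0 : deriv f z₀ ≠ 0) (hμ1 : ‖deriv f z₀‖ < 1) :
    IsLinearizableAt f z₀ (deriv f z₀) :=
  have ⟨_, hψ, hψ0, hψ', hconj⟩ := exists_semiconj_of_attracting hf hfix hμ0 hμ1
  isLinearizableAt_of_semiconj hf.continuousAt hfix hψ hψ0 (hψ' ▸ one_ne_zero) hconj

theorem isLinearizableAt_of_repelling {f : ℂ → ℂ} {z₀ : ℂ} (hf : AnalyticAt ℂ f z₀)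
    (hfix : f z₀ = z₀) (hμ : 1 < ‖deriv f z₀‖) : IsLinearizableAt f z₀ (deriv f z₀) := by
  have hμ0 : deriv f z₀ ≠ 0 := norm_pos_iff.1 (one_pos.trans hμ)
  obtain ⟨g, hg, hg0, hg', -, hright⟩ := hf.exists_localInverse hμ0
  rw [hfix] at hg hg0 hg' hright
  refine .of_rightInverse hμ0 ?_ hright
  rw [← hg']
  refine isLinearizableAt_of_attracting hg hg0 (by simpa [hg'] using hμ0) ?_
  rw [hg', norm_inv]
  exact inv_lt_one_of_one_lt₀ hμ

/-- Koenigs's linearization theorem: a holomorphic map `f` near a fixed point `z₀`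
with multiplier `λ = f'(z₀)` satisfying `|λ| ∉ {0,1}` (attracting or repelling) is
linearizable: there is a holomorphic `h` near `0` with `h(0) = z₀`, `h'(0) ≠ 0`, and
`f(h(z)) = h(λ z)` for `z` near `0`. -/
theorem koenigs_linearization
    (f : ℂ → ℂ) (z₀ : ℂ) (U : Set ℂ) (hU : U ∈ nhds z₀)
    (hf : DifferentiableOn ℂ f U) (hfix : f z₀ = z₀)
    (hl0 : ‖deriv f z₀‖ ≠ 0) (hl1 : ‖deriv f z₀‖ ≠ 1) :
    ∃ ε > (0 : ℝ), ∃ h : ℂ → ℂ,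
      DifferentiableOn ℂ h (Metric.ball 0 ε) ∧ h 0 = z₀ ∧ deriv h 0 ≠ 0 ∧
      ∀ z ∈ Metric.ball (0 : ℂ) ε, f (h z) = h (deriv f z₀ * z) := by
  have hfa : AnalyticAt ℂ f z₀ := hf.analyticAt hU
  rcases hl1.lt_or_gt with hattr | hrep
  · exact (isLinearizableAt_of_attracting hfa hfix (norm_ne_zero_iff.1 hl0) hattr).exists_ball
  · exact (isLinearizableAt_of_repelling hfa hfix hrep).exists_ball
end
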